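/- arXiv:1407.8088 — 2 statements merged into one kernel-verified Lean document; each statement's English description precedes it below -/
import Mathlib

section
/- Let p be a positive joint probability distribution over variables X_V that factorizes over an undirected graph G = (V, E). Then for every a ∈ V, every influence on X_a is blocked by conditioning on its Markov blanket: for every full assignment x ∈ val(V), p(x_a | x_{V∖{a}}) = p(x_a | x_{mb_G(a)}). -/
open Finset

/-- The marginal probability of the event that a full assignment agrees with `x` on `S`. -/
noncomputable def marginal {V : Type} [Fintype V] [DecidableEq V] {val : V → Type}
    [∀ v, Fintype (val v)] [∀ v, DecidableEq (val v)]
    (p : (∀ v, val v) → ℝ) (S : Finset V) (x : ∀ v, val v) : ℝ :=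
  ∑ y : ∀ v, val v, if ∀ v ∈ S, y v = x v then p y else 0

/-- The conditional probability `p(x_S | x_T)`. -/
noncomputable def condProb {V : Type} [Fintype V] [DecidableEq V] {val : V → Type}
    [∀ v, Fintype (val v)] [∀ v, DecidableEq (val v)]
    (p : (∀ v, val v) → ℝ) (S T : Finset V) (x : ∀ v, val v) : ℝ :=
  marginal p (S ∪ T) x / marginal p T x

/-- `p` factorizes over `G`: `p(x) = (1/Z) ∏_k φ_k(x_{D_k})` for a finite family of
cliques `D_k` of `G` with positive potentials `φ_k`, each depending only on the
coordinates in its scope `D_k`, and a normalizing constant `Z > 0`. -/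
def FactorizesOver {V : Type} [Fintype V] [DecidableEq V] {val : V → Type}
    [∀ v, Fintype (val v)] [∀ v, DecidableEq (val v)]
    (G : SimpleGraph V) (p : (∀ v, val v) → ℝ) : Prop :=
  ∃ (m : ℕ) (D : Fin m → Finset V) (φ : Fin m → (∀ v, val v) → ℝ) (Z : ℝ),
    0 < Z ∧
    (∀ k, G.IsClique (D k : Set V)) ∧
    (∀ k x, 0 < φ k x) ∧
    (∀ k x y, (∀ v ∈ D k, x v = y v) → φ k x = φ k y) ∧
    (∀ x, p x = (1 / Z) * ∏ k, φ k x)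

section helpers
variable {V : Type} [Fintype V] [DecidableEq V] {val : V → Type}
    [∀ v, Fintype (val v)] [∀ v, DecidableEq (val v)]

/-- Splitting a marginal sum over the value of one extra coordinate. -/
lemma split_sum (a : V) (S : Finset V) (ha : a ∉ S) (x : ∀ v, val v)
    (h : (∀ v, val v) → ℝ) :
    (∑ y : ∀ v, val v, if ∀ v ∈ S, y v = x v then h y else 0)
      = ∑ c : val a, ∑ y : ∀ v, val v,
          if ∀ v ∈ insert a S, y v = Function.update x a c v then h y else 0 := by
  rw [Finset.sum_comm]
  refine Finset.sum_congr rfl fun y _ => ?_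
  by_cases hy : ∀ v ∈ S, y v = x v
  · rw [if_pos hy, Finset.sum_eq_single (y a)]
    · rw [if_pos]
      intro v hv
      rcases Finset.mem_insert.mp hv with h' | hv'
      · subst h'; simp
      · have hva : v ≠ a := fun hq => ha (hq ▸ hv')
        rw [Function.update_of_ne hva]
        exact hy v hv'
    · intro c _ hc
      rw [if_neg]
      intro hcon
      exact hc ((by simpa using hcon a (Finset.mem_insert_self a S)) : y a = c).symm
    · intro hmem; exact absurd (Finset.mem_univ _) hmem
  · rw [if_neg hy]
    refine (Finset.sum_eq_zero fun c _ => ?_).symm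
    rw [if_neg]
    intro hcon
    apply hy
    intro v hv
    have hva : v ≠ a := fun hq => ha (hq ▸ hv)
    have := hcon v (Finset.mem_insert_of_mem hv)
    rwa [Function.update_of_ne hva] at this

/-- Swap the pinned value of one coordinate when everything else ignores it. -/
lemma sum_swap_coord (a : V) (c c' : val a) (Q : (∀ v, val v) → Prop) [DecidablePred Q]
    (g : (∀ v, val v) → ℝ)
    (hQ : ∀ y d, Q (Function.update y a d) ↔ Q y)
    (hg : ∀ y d, g (Function.update y a d) = g y) :
    (∑ y : ∀ v, val v, if y a = c ∧ Q y then g y else 0)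
      = ∑ y : ∀ v, val v, if y a = c' ∧ Q y then g y else 0 := by
  have hσ : Function.Involutive
      (fun y : ∀ v, val v => Function.update y a (Equiv.swap c c' (y a))) := by
    intro y
    funext v
    by_cases hv : v = a
    · subst hv; simp
    · simp [Function.update_of_ne hv]
  have hcomp := Equiv.sum_comp hσ.toPerm
    (fun y : ∀ v, val v => if y a = c ∧ Q y then g y else 0)
  rw [← hcomp]
  refine Finset.sum_congr rfl fun y _ => ?_
  have hsw : (Equiv.swap c c' (y a) = c) ↔ y a = c' := by
    constructor
    · intro h
      exact (Equiv.swap c c').injective (h.trans (Equiv.swap_apply_right c c').symm)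
    · intro h
      rw [h, Equiv.swap_apply_right]
  simp only [Function.Involutive.coe_toPerm, Function.update_self, hQ, hg, hsw]

end helpers

/-- For a positive distribution `p` factorizing over `G`, every influence on `X_a` is
blocked by its Markov blanket: `p(x_a | x_{V∖{a}}) = p(x_a | x_{mb_G(a)})`. -/
theorem blanket_blocks
    {V : Type} [Fintype V] [DecidableEq V] {val : V → Type}
    [∀ v, Fintype (val v)] [∀ v, DecidableEq (val v)] [∀ v, Nonempty (val v)]
    (G : SimpleGraph V) [DecidableRel G.Adj]
    (p : (∀ v, val v) → ℝ)
    (hpos : ∀ x, 0 < p x) (hp1 : ∑ x : ∀ v, val v, p x = 1)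
    (hfac : FactorizesOver G p) :
    ∀ (a : V) (x : ∀ v, val v),
      condProb p {a} (Finset.univ.erase a) x = condProb p {a} (G.neighborFinset a) x := by
  intro a x
  obtain ⟨m, D, φ, Z, hZ, hcl, hφpos, hloc, hpx⟩ := hfac
  set B := G.neighborFinset a with hB
  have haB : a ∉ B := by simp [hB]
  set f : (∀ v, val v) → ℝ :=
    fun y => ∏ k ∈ Finset.univ.filter (fun k => a ∈ D k), φ k y with hf
  set g : (∀ v, val v) → ℝ :=
    fun y => ∏ k ∈ Finset.univ.filter (fun k => a ∉ D k), φ k y with hg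
  have hfg : ∀ y, p y = (1 / Z) * (f y * g y) := by
    intro y
    rw [hpx]
    congr 1
    exact (Finset.prod_filter_mul_prod_filter_not Finset.univ
      (fun k => a ∈ D k) (fun k => φ k y)).symm
  have hfpos : ∀ y, 0 < f y := fun y => Finset.prod_pos fun k _ => hφpos k y
  have hgpos : ∀ y, 0 < g y := fun y => Finset.prod_pos fun k _ => hφpos k y
  have hf_loc : ∀ y z : ∀ v, val v, (∀ v ∈ insert a B, y v = z v) → f y = f z := by
    intro y z hyz
    refine Finset.prod_congr rfl fun k hk => ?_
    have hak : a ∈ D k := (Finset.mem_filter.mp hk).2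
    refine hloc k y z fun v hv => ?_
    apply hyz
    rcases eq_or_ne v a with rfl | hva
    · exact Finset.mem_insert_self _ _
    · refine Finset.mem_insert_of_mem ?_
      rw [hB, SimpleGraph.mem_neighborFinset]
      exact hcl k hak hv (Ne.symm hva)
  have hg_loc : ∀ y z : ∀ v, val v, (∀ v, v ≠ a → y v = z v) → g y = g z := by
    intro y z hyz
    refine Finset.prod_congr rfl fun k hk => ?_
    have hak : a ∉ D k := (Finset.mem_filter.mp hk).2
    exact hloc k y z fun v hv => hyz v (by rintro rfl; exact hak hv)
  have marg_univ : ∀ x' : ∀ v, val v,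
      (∑ y : ∀ v, val v, if ∀ v ∈ (Finset.univ : Finset V), y v = x' v then p y else 0)
        = p x' := by
    intro x'
    rw [Finset.sum_eq_single x']
    · simp
    · intro y _ hy
      rw [if_neg]
      intro hcon
      exact hy (funext fun v => hcon v (Finset.mem_univ v))
    · intro hmem; exact absurd (Finset.mem_univ _) hmem
  have key : ∀ x' : ∀ v, val v,
      (∑ y : ∀ v, val v, if ∀ v ∈ insert a B, y v = x' v then p y else 0)
        = (1 / Z) * f x' * ∑ y : ∀ v, val v,
            (if ∀ v ∈ insert a B, y v = x' v then g y else 0) := by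
    intro x'
    rw [Finset.mul_sum]
    refine Finset.sum_congr rfl fun y _ => ?_
    by_cases h : ∀ v ∈ insert a B, y v = x' v
    · rw [if_pos h, if_pos h, hfg, hf_loc y x' h]; ring
    · rw [if_neg h, if_neg h, mul_zero]
  set S1 : ℝ := ∑ c : val a, f (Function.update x a c) with hS1
  set GS : ℝ := ∑ y : ∀ v, val v, if ∀ v ∈ insert a B, y v = x v then g y else 0 with hGS
  have hS1pos : 0 < S1 := Finset.sum_pos (fun c _ => hfpos _) Finset.univ_nonempty
  have hGSpos : 0 < GS := by
    rw [hGS]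
    refine Finset.sum_pos' (fun y _ => by split; exacts [le_of_lt (hgpos y), le_rfl]) ⟨x, Finset.mem_univ x, ?_⟩
    rw [if_pos fun v _ => rfl]
    exact hgpos x
  have cond : ∀ (c : val a) (y : ∀ v, val v),
      (∀ v ∈ insert a B, y v = Function.update x a c v)
        ↔ (y a = c ∧ ∀ v ∈ B, y v = x v) := by
    intro c y
    constructor
    · intro h
      refine ⟨by simpa using h a (Finset.mem_insert_self a B), fun v hv => ?_⟩
      have hva : v ≠ a := fun hq => haB (hq ▸ hv)
      have := h v (Finset.mem_insert_of_mem hv)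
      rwa [Function.update_of_ne hva] at this
    · rintro ⟨h1, h2⟩ v hv
      rcases Finset.mem_insert.mp hv with h' | hv'
      · subst h'; simpa using h1
      · have hva : v ≠ a := fun hq => haB (hq ▸ hv')
        rw [Function.update_of_ne hva]
        exact h2 v hv'
  have condx : ∀ y : ∀ v, val v,
      (∀ v ∈ insert a B, y v = x v) ↔ (y a = x a ∧ ∀ v ∈ B, y v = x v) := by
    intro y
    have := cond (x a) y
    rwa [Function.update_eq_self] at this
  have hGSc : ∀ c : val a,
      (∑ y : ∀ v, val v, if ∀ v ∈ insert a B, y v = Function.update x a c v then g y else 0)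
        = GS := by
    intro c
    have e1 : (∑ y : ∀ v, val v,
        if ∀ v ∈ insert a B, y v = Function.update x a c v then g y else 0)
        = ∑ y : ∀ v, val v, if y a = c ∧ ∀ v ∈ B, y v = x v then g y else 0 :=
      Finset.sum_congr rfl fun y _ => if_congr (cond c y) rfl rfl
    have e2 : GS = ∑ y : ∀ v, val v, if y a = x a ∧ ∀ v ∈ B, y v = x v then g y else 0 :=
      Finset.sum_congr rfl fun y _ => if_congr (condx y) rfl rfl
    rw [e1, e2]
    refine sum_swap_coord a c (x a) (fun y => ∀ v ∈ B, y v = x v) g ?_ ?_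
    · intro y d
      constructor
      · intro h v hv
        have hva : v ≠ a := fun hq => haB (hq ▸ hv)
        have := h v hv
        rwa [Function.update_of_ne hva] at this
      · intro h v hv
        have hva : v ≠ a := fun hq => haB (hq ▸ hv)
        rw [Function.update_of_ne hva]
        exact h v hv
    · intro y d
      exact hg_loc _ _ fun v hv => Function.update_of_ne hv _ _
  have hm1 : marginal p ({a} ∪ Finset.univ.erase a) x = (1 / Z) * (f x * g x) := by
    rw [← Finset.insert_eq, Finset.insert_erase (Finset.mem_univ a)]
    simp only [marginal]
    rw [marg_univ, hfg]
  have hm2 : marginal p (Finset.univ.erase a) x = (1 / Z) * g x * S1 := by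
    simp only [marginal]
    rw [split_sum a _ (by simp) x p]
    have step : ∀ c : val a,
        (∑ y : ∀ v, val v,
          if ∀ v ∈ insert a (Finset.univ.erase a), y v = Function.update x a c v
          then p y else 0)
        = (1 / Z) * g x * f (Function.update x a c) := by
      intro c
      rw [Finset.insert_erase (Finset.mem_univ a), marg_univ, hfg]
      rw [hg_loc (Function.update x a c) x fun v hv => Function.update_of_ne hv _ _]
      ring
    rw [Finset.sum_congr rfl fun c _ => step c, ← Finset.mul_sum]
  have hm3 : marginal p ({a} ∪ B) x = (1 / Z) * f x * GS := by
    rw [← Finset.insert_eq]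
    simp only [marginal]
    rw [key x]
  have hm4 : marginal p B x = (1 / Z) * S1 * GS := by
    simp only [marginal]
    rw [split_sum a B haB x p]
    have step : ∀ c : val a,
        (∑ y : ∀ v, val v,
          if ∀ v ∈ insert a B, y v = Function.update x a c v then p y else 0)
        = (1 / Z) * f (Function.update x a c) * GS := by
      intro c
      rw [key (Function.update x a c), hGSc c]
    rw [Finset.sum_congr rfl fun c _ => step c]
    simp only [hS1, Finset.mul_sum, Finset.sum_mul]
  have hZ' : (1 : ℝ) / Z ≠ 0 := by positivity
  have hgx : g x ≠ 0 := ne_of_gt (hgpos x)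
  have hS1' : S1 ≠ 0 := ne_of_gt hS1pos
  have hGS' : GS ≠ 0 := ne_of_gt hGSpos
  simp only [condProb]
  rw [hm1, hm2, hm3, hm4]
  field_simp
end

section
/- Let p be a positive joint probability distribution over variables X_V that factorizes over an undirected graph G = (V, E). Then G is an I-map for p: for all pairwise disjoint subsets A, B, S ⊆ V such that S separates A and B in G (every path in G from a vertex of A to a vertex of B contains a vertex of S), the conditional independence ⟂(X_A; X_B | X_S) holds in p. -/
open Finset

set_option maxHeartbeats 1000000

/-- Conditional independence ⟂(X_A; X_B | X_U). -/
def CondIndep {V : Type} [Fintype V] [DecidableEq V] {val : V → Type}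
    [∀ v, Fintype (val v)] [∀ v, DecidableEq (val v)]
    (p : (∀ v, val v) → ℝ) (A B U : Finset V) : Prop :=
  ∀ x : ∀ v, val v, 0 < marginal p (B ∪ U) x →
    condProb p A (B ∪ U) x = condProb p A U x

/-- `S` separates `A` and `B` in `G`: every path from a vertex of `A` to a vertex of `B`
contains a vertex of `S`. -/
def Separates {V : Type} (G : SimpleGraph V) (A B S : Finset V) : Prop :=
  ∀ a ∈ A, ∀ b ∈ B, ∀ w : G.Walk a b, w.IsPath → ∃ v ∈ w.support, v ∈ S

lemma marginal_pos {V : Type} [Fintype V] [DecidableEq V] {val : V → Type}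
    [∀ v, Fintype (val v)] [∀ v, DecidableEq (val v)]
    (p : (∀ v, val v) → ℝ) (hpos : ∀ y, 0 < p y) (S : Finset V) (x : ∀ v, val v) :
    0 < marginal p S x := by
  unfold marginal
  have h1 := Finset.single_le_sum
      (f := fun y : ∀ v, val v => if ∀ v ∈ S, y v = x v then p y else 0)
      (fun y _ => by split
                     · exact (hpos y).le
                     · exact le_rfl)
      (Finset.mem_univ x)
  rw [if_pos (fun v _ => rfl)] at h1
  exact lt_of_lt_of_le (hpos x) h1

lemma marginal_mul_marginal
    {V : Type} [Fintype V] [DecidableEq V] {val : V → Type}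
    [∀ v, Fintype (val v)] [∀ v, DecidableEq (val v)]
    (p f g : (∀ v, val v) → ℝ)
    (P Q : Set V) [DecidablePred (· ∈ P)]
    (A B S : Finset V)
    (hcover : ∀ v, v ∈ P ∨ v ∈ Q)
    (hPQS : ∀ v, v ∈ P → v ∈ Q → v ∈ S)
    (hASP : ∀ v, v ∈ A ∪ S → v ∈ P)
    (hBSQ : ∀ v, v ∈ B ∪ S → v ∈ Q)
    (hBS : Disjoint B S)
    (hf : ∀ a b, (∀ v ∈ P, a v = b v) → f a = f b)
    (hg : ∀ a b, (∀ v ∈ Q, a v = b v) → g a = g b)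
    (hp : ∀ y, p y = f y * g y)
    (x : ∀ v, val v) :
    marginal p (A ∪ B ∪ S) x * marginal p S x
      = marginal p (A ∪ S) x * marginal p (B ∪ S) x := by
  classical
  have hSP : ∀ v ∈ S, v ∈ P := fun v hv => hASP v (Finset.mem_union_right _ hv)
  have hBnP : ∀ v ∈ B, v ∉ P := by
    intro v hv hvP
    exact Finset.disjoint_left.mp hBS hv
      (hPQS v hvP (hBSQ v (Finset.mem_union_left _ hv)))
  unfold marginal
  rw [Finset.sum_mul_sum, Finset.sum_mul_sum]
  have hinv : Function.Involutive (fun yz : (∀ v, val v) × (∀ v, val v) =>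
      ((fun v => if v ∈ P then yz.1 v else yz.2 v : ∀ v, val v),
       (fun v => if v ∈ P then yz.2 v else yz.1 v : ∀ v, val v))) := by
    intro yz
    refine Prod.ext ?_ ?_ <;> funext v <;> by_cases h : v ∈ P <;> simp [h]
  have hbij : ∑ yz : (∀ v, val v) × (∀ v, val v),
      (if ∀ v ∈ A ∪ B ∪ S, yz.1 v = x v then p yz.1 else 0) *
        (if ∀ v ∈ S, yz.2 v = x v then p yz.2 else 0)
      = ∑ yz : (∀ v, val v) × (∀ v, val v),
      (if ∀ v ∈ A ∪ S, yz.1 v = x v then p yz.1 else 0) *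
        (if ∀ v ∈ B ∪ S, yz.2 v = x v then p yz.2 else 0) := by
    refine Fintype.sum_bijective _ hinv.bijective _ _ ?_
    rintro ⟨y, z⟩
    dsimp only
    set u : ∀ v, val v := fun v => if v ∈ P then y v else z v with hu_def
    set u' : ∀ v, val v := fun v => if v ∈ P then z v else y v with hu'_def
    by_cases h1 : (∀ v ∈ A ∪ B ∪ S, y v = x v) ∧ (∀ v ∈ S, z v = x v)
    · obtain ⟨h1a, h1b⟩ := h1
      have hu : ∀ v ∈ A ∪ S, u v = x v := by
        intro v hv
        have hvP := hASP v hv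
        have hv' : v ∈ A ∪ B ∪ S := by
          rcases Finset.mem_union.mp hv with h | h
          · exact Finset.mem_union_left _ (Finset.mem_union_left _ h)
          · exact Finset.mem_union_right _ h
        simp only [hu_def, if_pos hvP]
        exact h1a v hv'
      have hu' : ∀ v ∈ B ∪ S, u' v = x v := by
        intro v hv
        rcases Finset.mem_union.mp hv with hb | hs
        · have hnP := hBnP v hb
          simp only [hu'_def, if_neg hnP]
          exact h1a v (Finset.mem_union_left _ (Finset.mem_union_right _ hb))
        · have hP := hSP v hs
          simp only [hu'_def, if_pos hP]
          exact h1b v hs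
      rw [if_pos h1a, if_pos h1b, if_pos hu, if_pos hu']
      have hfu : f u = f y := hf u y (fun v hv => by simp only [hu_def, if_pos hv])
      have hgu : g u = g z := by
        refine hg u z (fun v hvQ => ?_)
        by_cases hP : v ∈ P
        · have hvS := hPQS v hP hvQ
          simp only [hu_def, if_pos hP]
          rw [h1a v (Finset.mem_union_right _ hvS), h1b v hvS]
        · simp only [hu_def, if_neg hP]
      have hfu' : f u' = f z := hf u' z (fun v hv => by simp only [hu'_def, if_pos hv])
      have hgu' : g u' = g y := by
        refine hg u' y (fun v hvQ => ?_)
        by_cases hP : v ∈ P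
        · have hvS := hPQS v hP hvQ
          simp only [hu'_def, if_pos hP]
          rw [h1b v hvS, h1a v (Finset.mem_union_right _ hvS)]
        · simp only [hu'_def, if_neg hP]
      rw [hp y, hp z, hp u, hp u', hfu, hgu, hfu', hgu']
      ring
    · have h2 : ¬((∀ v ∈ A ∪ S, u v = x v) ∧ (∀ v ∈ B ∪ S, u' v = x v)) := by
        rintro ⟨ha, hb⟩
        refine h1 ⟨?_, ?_⟩
        · intro v hv
          rcases Finset.mem_union.mp hv with hab | hs
          · rcases Finset.mem_union.mp hab with hA | hB
            · have hvP := hASP v (Finset.mem_union_left _ hA)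
              have h := ha v (Finset.mem_union_left _ hA)
              simpa only [hu_def, if_pos hvP] using h
            · have hnP := hBnP v hB
              have h := hb v (Finset.mem_union_left _ hB)
              simpa only [hu'_def, if_neg hnP] using h
          · have hvP := hSP v hs
            have h := ha v (Finset.mem_union_right _ hs)
            simpa only [hu_def, if_pos hvP] using h
        · intro v hv
          have hvP := hSP v hv
          have h := hb v (Finset.mem_union_right _ hv)
          simpa only [hu'_def, if_pos hvP] using h
      have hL : (if ∀ v ∈ A ∪ B ∪ S, y v = x v then p y else 0) *
          (if ∀ v ∈ S, z v = x v then p z else 0) = 0 := by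
        rcases not_and_or.mp h1 with h | h
        · rw [if_neg h, zero_mul]
        · rw [if_neg h, mul_zero]
      have hR : (if ∀ v ∈ A ∪ S, u v = x v then p u else 0) *
          (if ∀ v ∈ B ∪ S, u' v = x v then p u' else 0) = 0 := by
        rcases not_and_or.mp h2 with h | h
        · rw [if_neg h, zero_mul]
        · rw [if_neg h, mul_zero]
      rw [hL, hR]
  exact (Fintype.sum_prod_type _).symm.trans (hbij.trans (Fintype.sum_prod_type _))

/-- A positive distribution that factorizes over `G` has `G` as an I-map: every
separation in `G` between pairwise disjoint sets yields a conditional independence. -/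
theorem factorizes_isIMap
    {V : Type} [Fintype V] [DecidableEq V] {val : V → Type}
    [∀ v, Fintype (val v)] [∀ v, DecidableEq (val v)] [∀ v, Nonempty (val v)]
    (G : SimpleGraph V)
    (p : (∀ v, val v) → ℝ)
    (hpos : ∀ x, 0 < p x) (hp1 : ∑ x : ∀ v, val v, p x = 1)
    (hfac : FactorizesOver G p) :
    ∀ A B S : Finset V, Disjoint A B → Disjoint A S → Disjoint B S →
      Separates G A B S → CondIndep p A B S := by
  classical
  intro A B S hAB hAS0 hBS0 hsep
  obtain ⟨m, D, φ, Z, hZ, hclq, hφpos, hφloc, hpfac⟩ := hfac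
  set Acc : Set V := {v | ∃ a ∈ A, ∃ w : G.Walk a v, ∀ u ∈ w.support, u ∉ S} with hAcc_def
  have hAccS : ∀ v ∈ Acc, v ∉ S := by
    rintro v ⟨a, ha, w, hw⟩
    exact hw v w.end_mem_support
  have hA_Acc : ∀ a ∈ A, a ∈ Acc := by
    intro a ha
    refine ⟨a, ha, SimpleGraph.Walk.nil, ?_⟩
    intro u hu
    rw [SimpleGraph.Walk.support_nil, List.mem_singleton] at hu
    subst hu
    exact Finset.disjoint_left.mp hAS0 ha
  have hB_Acc : ∀ b ∈ B, b ∉ Acc := by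
    rintro b hb ⟨a, ha, w, hw⟩
    obtain ⟨v, hv, hvS⟩ := hsep a ha b hb w.bypass w.bypass_isPath
    exact hw v (w.support_bypass_subset hv) hvS
  set P : Set V := Acc ∪ ↑S with hP_def
  set Q : Set V := {v | v ∉ Acc} with hQ_def
  have hdich : ∀ k, (↑(D k) : Set V) ⊆ P ∨ (↑(D k) : Set V) ⊆ Q := by
    intro k
    by_cases hex : ∃ u ∈ D k, u ∈ Acc
    · left
      obtain ⟨u, hu, a, ha, w, hw⟩ := hex
      intro v hv
      by_cases hvS : v ∈ S
      · exact Or.inr (Finset.mem_coe.mpr hvS)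
      · refine Or.inl ?_
        rcases eq_or_ne v u with rfl | hne
        · exact ⟨a, ha, w, hw⟩
        · have hadj : G.Adj u v := hclq k (Finset.mem_coe.mpr hu) hv hne.symm
          refine ⟨a, ha, w.concat hadj, ?_⟩
          intro t ht
          rw [SimpleGraph.Walk.support_concat,
            List.mem_append, List.mem_singleton] at ht
          rcases ht with ht | rfl
          · exact hw t ht
          · exact hvS
    · right
      push_neg at hex
      intro v hv
      exact hex v (Finset.mem_coe.mp hv)
  have hcover : ∀ v, v ∈ P ∨ v ∈ Q := by
    intro v
    by_cases h : v ∈ Acc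
    · exact Or.inl (Or.inl h)
    · exact Or.inr h
  have hPQS : ∀ v, v ∈ P → v ∈ Q → v ∈ S := by
    intro v hvP hvQ
    rcases hvP with h | h
    · exact absurd h hvQ
    · exact Finset.mem_coe.mp h
  have hASP : ∀ v, v ∈ A ∪ S → v ∈ P := by
    intro v hv
    rcases Finset.mem_union.mp hv with h | h
    · exact Or.inl (hA_Acc v h)
    · exact Or.inr (Finset.mem_coe.mpr h)
  have hBSQ : ∀ v, v ∈ B ∪ S → v ∈ Q := by
    intro v hv
    rcases Finset.mem_union.mp hv with h | h
    · exact hB_Acc v h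
    · exact fun hAccv => hAccS v hAccv h
  set f : (∀ v, val v) → ℝ :=
    fun y => (1 / Z) * ∏ k ∈ Finset.univ.filter (fun k => (↑(D k) : Set V) ⊆ P), φ k y
    with hf_def
  set g : (∀ v, val v) → ℝ :=
    fun y => ∏ k ∈ Finset.univ.filter (fun k => ¬((↑(D k) : Set V) ⊆ P)), φ k y
    with hg_def
  have hp : ∀ y, p y = f y * g y := by
    intro y
    rw [hpfac y, hf_def, hg_def]
    dsimp only
    rw [mul_assoc, Finset.prod_filter_mul_prod_filter_not Finset.univ
      (fun k => (↑(D k) : Set V) ⊆ P) (fun k => φ k y)]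
  have hf : ∀ a b, (∀ v ∈ P, a v = b v) → f a = f b := by
    intro a b hab
    simp only [hf_def]
    congr 1
    refine Finset.prod_congr rfl (fun k hk => ?_)
    rw [Finset.mem_filter] at hk
    exact hφloc k a b (fun v hv => hab v (hk.2 (Finset.mem_coe.mpr hv)))
  have hg : ∀ a b, (∀ v ∈ Q, a v = b v) → g a = g b := by
    intro a b hab
    simp only [hg_def]
    refine Finset.prod_congr rfl (fun k hk => ?_)
    rw [Finset.mem_filter] at hk
    have hQk : (↑(D k) : Set V) ⊆ Q := (hdich k).resolve_left hk.2
    exact hφloc k a b (fun v hv => hab v (hQk (Finset.mem_coe.mpr hv)))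
  intro x hx
  have hkey := marginal_mul_marginal p f g P Q A B S hcover hPQS hASP hBSQ hBS0 hf hg hp x
  have h1 : 0 < marginal p S x := marginal_pos p hpos S x
  have h2 : 0 < marginal p (B ∪ S) x := marginal_pos p hpos (B ∪ S) x
  unfold condProb
  rw [div_eq_div_iff h2.ne' h1.ne', ← Finset.union_assoc]
  exact hkey
end
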